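/- arXiv:1801.07701 — 2 statements merged into one kernel-verified Lean document; each statement's English description precedes it below -/
import Mathlib

section
/- Let F_n(cos θ) denote any of the kernels K_n^d(cos θ), G_n^{d+1}(cos θ), or G_n^{d+2}(cos θ). Then for all θ with 0 ≤ θ ≤ 1/(2n), one has F_n(cos θ) ≥ (1/2) ‖F_n‖_∞, and moreover ‖F_n‖_∞ = F_n(1) is comparable to (n+1)^d with implied constants depending only on d. -/
open MeasureTheory Finset Real
open scoped RealInnerProductSpace BigOperators

noncomputable section

/-- The Gegenbauer (ultraspherical) polynomials `C_n^λ`, defined via the standard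
three-term recurrence `(n+2) C_{n+2}^λ(t) = 2(n+1+λ) t C_{n+1}^λ(t) − (n+2λ) C_n^λ(t)`,
`C_0^λ = 1`, `C_1^λ(t) = 2λt`; they are orthogonal on `[−1,1]` w.r.t. `(1−t²)^{λ−1/2}`. -/
def gegenbauer (lam : ℝ) : ℕ → ℝ → ℝ
  | 0 => fun _ => 1
  | 1 => fun t => 2 * lam * t
  | n + 2 => fun t =>
      (2 * ((n : ℝ) + 1 + lam) * t * gegenbauer lam (n + 1) t
        - ((n : ℝ) + 2 * lam) * gegenbauer lam n t) / ((n : ℝ) + 2)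

/-- `E_n^λ(t) = ((n+λ)/λ) C_n^λ(t)`. -/
def gegenbauerE (lam : ℝ) (n : ℕ) (t : ℝ) : ℝ := (((n : ℝ) + lam) / lam) * gegenbauer lam n t

/-- `A_j^δ = Γ(j+δ+1)/(Γ(j+1)Γ(δ+1))`. -/
def cesaroA (del : ℝ) (j : ℕ) : ℝ :=
  Real.Gamma ((j : ℝ) + del + 1) / (Real.Gamma ((j : ℝ) + 1) * Real.Gamma (del + 1))

/-- The Cesàro-type kernel `K_L^δ(t) = Σ_{k=0}^L (A_{L−k}^δ/A_L^δ) E_k^λ(t)`. -/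
def cesaroK (lam del : ℝ) (L : ℕ) (t : ℝ) : ℝ :=
  ∑ k ∈ Finset.range (L + 1), (cesaroA del (L - k) / cesaroA del L) * gegenbauerE lam k t

/-- The once-averaged kernel `G_n^{d+1}(t) = (1/(n+1)) Σ_{j=0}^n K_j^d(t)`,
with `λ = (d−1)/2`. -/
def kernelG1 (d : ℕ) (n : ℕ) (t : ℝ) : ℝ :=
  (1 / ((n : ℝ) + 1)) * ∑ j ∈ Finset.range (n + 1), cesaroK (((d : ℝ) - 1) / 2) (d : ℝ) j t

/-- The twice-averaged kernel `G_n^{d+2}(t) = (1/(n+1)) Σ_{j=0}^n G_j^{d+1}(t)`. -/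
def kernelG2 (d : ℕ) (n : ℕ) (t : ℝ) : ℝ :=
  (1 / ((n : ℝ) + 1)) * ∑ j ∈ Finset.range (n + 1), kernelG1 d j t

def gegA (lam : ℝ) : ℕ → ℝ
  | 0 => 1
  | k + 1 => gegA lam k * ((k : ℝ) + lam) / ((k : ℝ) + 1)

lemma gegA_pos {lam : ℝ} (hlam : 0 < lam) (k : ℕ) : 0 < gegA lam k := by
  induction k with
  | zero => norm_num [gegA]
  | succ k ih =>
      simp only [gegA]
      apply div_pos (mul_pos ih (by positivity)) (by positivity)

lemma gegenbauer_cos_expansion (lam : ℝ) (n : ℕ) (θ : ℝ) :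
    gegenbauer lam n (Real.cos θ) =
      ∑ k ∈ Finset.range (n + 1),
        gegA lam k * gegA lam (n - k) * Real.cos (((n : ℝ) - 2 * (k : ℝ)) * θ) := by
  induction n using Nat.strong_induction_on with
  | _ n ih =>
    match n with
    | 0 => simp [gegenbauer, gegA]
    | 1 =>
        simp only [gegenbauer]
        rw [Finset.sum_range_succ, Finset.sum_range_one]
        norm_num [gegA]
        ring
    | (m+2) =>
        have h1 := ih (m+1) (by omega)
        have h0 := ih m (by omega)
        set b : ℕ → ℝ := gegA lam with hb
        have hbrec : ∀ j : ℕ, b (j+1) = b j * ((j:ℝ) + lam) / ((j:ℝ)+1) := fun j => rfl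
        have key : ((m:ℝ)+2) * (∑ k ∈ Finset.range (m+2+1), b k * b (m+2-k) *
              Real.cos ((((m:ℝ)+2) - 2*(k:ℝ))*θ))
            + ((m:ℝ)+2*lam) * (∑ k ∈ Finset.range (m+1), b k * b (m-k) *
              Real.cos (((m:ℝ) - 2*(k:ℝ))*θ))
            = ((m:ℝ)+1+lam) * (2 * Real.cos θ * ∑ k ∈ Finset.range (m+1+1), b k * b (m+1-k) *
              Real.cos ((((m:ℝ)+1) - 2*(k:ℝ))*θ)) := by
          have expand : 2 * Real.cos θ * ∑ k ∈ Finset.range (m+1+1), b k * b (m+1-k) *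
              Real.cos ((((m:ℝ)+1) - 2*(k:ℝ))*θ)
              = ∑ k ∈ Finset.range (m+2), b k * b (m+1-k) *
                (Real.cos ((((m:ℝ)+2) - 2*(k:ℝ))*θ) + Real.cos (((m:ℝ) - 2*(k:ℝ))*θ)) := by
            rw [Finset.mul_sum]
            refine Finset.sum_congr rfl (fun k _ => ?_)
            have trig : Real.cos ((((m:ℝ)+2) - 2*(k:ℝ))*θ) + Real.cos (((m:ℝ) - 2*(k:ℝ))*θ)
                = 2 * Real.cos θ * Real.cos ((((m:ℝ)+1) - 2*(k:ℝ))*θ) := by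
              rw [show (((m:ℝ)+2) - 2*(k:ℝ))*θ = ((((m:ℝ)+1) - 2*(k:ℝ))*θ) + θ by ring,
                show (((m:ℝ)) - 2*(k:ℝ))*θ = ((((m:ℝ)+1) - 2*(k:ℝ))*θ) - θ by ring,
                Real.cos_add, Real.cos_sub]
              ring
            rw [trig]; ring
          rw [expand]
          have hLP : ((m:ℝ)+2) * (∑ k ∈ Finset.range (m+2+1), b k * b (m+2-k) *
                Real.cos ((((m:ℝ)+2) - 2*(k:ℝ))*θ))
              = (∑ k ∈ Finset.range (m+1), ((m:ℝ)+2) * (b (k+1) * b ((m-k)+1)) *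
                  Real.cos (((m:ℝ) - 2*(k:ℝ))*θ))
                + ((m:ℝ)+2) * (b (m+2) * b 0) * Real.cos (-(((m:ℝ)+2) * θ))
                + ((m:ℝ)+2) * (b 0 * b (m+2)) * Real.cos (((m:ℝ)+2) * θ) := by
            rw [Finset.mul_sum]
            rw [Finset.sum_range_succ'
              (fun k => ((m:ℝ)+2) * (b k * b (m+2-k) * Real.cos ((((m:ℝ)+2) - 2*(k:ℝ))*θ)))]
            rw [Finset.sum_range_succ]
            have hmid : ∀ k ∈ Finset.range (m+1),
                ((m:ℝ)+2) * (b (k+1) * b (m+2-(k+1)) * Real.cos ((((m:ℝ)+2) - 2*((k+1:ℕ):ℝ))*θ))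
                = ((m:ℝ)+2) * (b (k+1) * b ((m-k)+1)) * Real.cos (((m:ℝ) - 2*(k:ℝ))*θ) := by
              intro k hk
              have hk' : k ≤ m := by simpa [Nat.lt_succ_iff] using hk
              rw [show m+2-(k+1) = (m-k)+1 by omega]
              rw [show (((m:ℝ)+2) - 2*((k+1:ℕ):ℝ))*θ = (((m:ℝ)) - 2*(k:ℝ))*θ by push_cast; ring]
              ring
            rw [Finset.sum_congr rfl hmid]
            have e1 : ((m:ℝ)+2) * (b (m+1+1) * b (m+2-(m+1+1)) *
                Real.cos ((((m:ℝ)+2) - 2*((m+1+1:ℕ):ℝ))*θ))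
                = ((m:ℝ)+2) * (b (m+2) * b 0) * Real.cos (-(((m:ℝ)+2) * θ)) := by
              rw [show m+2-(m+1+1) = 0 by omega]
              rw [show (((m:ℝ)+2) - 2*((m+1+1:ℕ):ℝ))*θ = -(((m:ℝ)+2) * θ) by push_cast; ring]
              ring
            have e2 : ((m:ℝ)+2) * (b 0 * b (m+2-0) * Real.cos ((((m:ℝ)+2) - 2*((0:ℕ):ℝ))*θ))
                = ((m:ℝ)+2) * (b 0 * b (m+2)) * Real.cos (((m:ℝ)+2) * θ) := by
              rw [show m+2-0 = m+2 by omega]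
              rw [show (((m:ℝ)+2) - 2*((0:ℕ):ℝ))*θ = (((m:ℝ)+2) * θ) by push_cast; ring]
              ring
            rw [e1, e2]
          have split : ((m:ℝ)+1+lam) * ∑ k ∈ Finset.range (m+2), b k * b (m+1-k) *
                (Real.cos ((((m:ℝ)+2) - 2*(k:ℝ))*θ) + Real.cos (((m:ℝ) - 2*(k:ℝ))*θ))
              = (∑ k ∈ Finset.range (m+2), ((m:ℝ)+1+lam) * (b k * b (m+1-k)) *
                  Real.cos ((((m:ℝ)+2) - 2*(k:ℝ))*θ))
               + (∑ k ∈ Finset.range (m+2), ((m:ℝ)+1+lam) * (b k * b (m+1-k)) *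
                  Real.cos (((m:ℝ) - 2*(k:ℝ))*θ)) := by
            rw [Finset.mul_sum, ← Finset.sum_add_distrib]
            exact Finset.sum_congr rfl (fun k _ => by ring)
          rw [split]
          have hRB1 : (∑ k ∈ Finset.range (m+2), ((m:ℝ)+1+lam) * (b k * b (m+1-k)) *
                  Real.cos ((((m:ℝ)+2) - 2*(k:ℝ))*θ))
              = (∑ k ∈ Finset.range (m+1), ((m:ℝ)+1+lam) * (b (k+1) * b (m-k)) *
                  Real.cos (((m:ℝ) - 2*(k:ℝ))*θ))
                + ((m:ℝ)+1+lam) * (b 0 * b (m+1)) * Real.cos (((m:ℝ)+2) * θ) := by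
            rw [Finset.sum_range_succ'
              (fun k => ((m:ℝ)+1+lam) * (b k * b (m+1-k)) * Real.cos ((((m:ℝ)+2) - 2*(k:ℝ))*θ))]
            have hmid : ∀ k ∈ Finset.range (m+1),
                ((m:ℝ)+1+lam) * (b (k+1) * b (m+1-(k+1))) * Real.cos ((((m:ℝ)+2) - 2*((k+1:ℕ):ℝ))*θ)
                = ((m:ℝ)+1+lam) * (b (k+1) * b (m-k)) * Real.cos (((m:ℝ) - 2*(k:ℝ))*θ) := by
              intro k hk
              rw [show m+1-(k+1) = m-k by omega]
              rw [show (((m:ℝ)+2) - 2*((k+1:ℕ):ℝ))*θ = (((m:ℝ)) - 2*(k:ℝ))*θ by push_cast; ring]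
            rw [Finset.sum_congr rfl hmid]
            rw [show m+1-0 = m+1 by omega]
            rw [show (((m:ℝ)+2) - 2*((0:ℕ):ℝ))*θ = (((m:ℝ)+2) * θ) by push_cast; ring]
          have hRB2 : (∑ k ∈ Finset.range (m+2), ((m:ℝ)+1+lam) * (b k * b (m+1-k)) *
                  Real.cos (((m:ℝ) - 2*(k:ℝ))*θ))
              = (∑ k ∈ Finset.range (m+1), ((m:ℝ)+1+lam) * (b k * b ((m-k)+1)) *
                  Real.cos (((m:ℝ) - 2*(k:ℝ))*θ))
                + ((m:ℝ)+1+lam) * (b (m+1) * b 0) * Real.cos (-(((m:ℝ)+2) * θ)) := by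
            rw [Finset.sum_range_succ]
            have hmid : ∀ k ∈ Finset.range (m+1),
                ((m:ℝ)+1+lam) * (b k * b (m+1-k)) * Real.cos (((m:ℝ) - 2*(k:ℝ))*θ)
                = ((m:ℝ)+1+lam) * (b k * b ((m-k)+1)) * Real.cos (((m:ℝ) - 2*(k:ℝ))*θ) := by
              intro k hk
              have hk' : k ≤ m := by simpa [Nat.lt_succ_iff] using hk
              rw [show m+1-k = (m-k)+1 by omega]
            rw [Finset.sum_congr rfl hmid]
            rw [show m+1-(m+1) = 0 by omega]
            rw [show (((m:ℝ)) - 2*((m+1:ℕ):ℝ))*θ = -(((m:ℝ)+2) * θ) by push_cast; ring]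
          rw [hLP, hRB1, hRB2, Finset.mul_sum]
          -- middle sums identity
          have hmain : (∑ k ∈ Finset.range (m+1), ((m:ℝ)+2) * (b (k+1) * b ((m-k)+1)) *
                  Real.cos (((m:ℝ) - 2*(k:ℝ))*θ))
              + (∑ k ∈ Finset.range (m+1), ((m:ℝ)+2*lam) * (b k * b (m-k) *
                  Real.cos (((m:ℝ) - 2*(k:ℝ))*θ)))
              = (∑ k ∈ Finset.range (m+1), ((m:ℝ)+1+lam) * (b (k+1) * b (m-k)) *
                  Real.cos (((m:ℝ) - 2*(k:ℝ))*θ))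
              + (∑ k ∈ Finset.range (m+1), ((m:ℝ)+1+lam) * (b k * b ((m-k)+1)) *
                  Real.cos (((m:ℝ) - 2*(k:ℝ))*θ)) := by
            rw [← Finset.sum_add_distrib, ← Finset.sum_add_distrib]
            refine Finset.sum_congr rfl (fun k hk => ?_)
            have hk' : k ≤ m := by simpa [Nat.lt_succ_iff] using Finset.mem_range.mp hk
            obtain ⟨j, rfl⟩ : ∃ j, m = k + j := ⟨m - k, by omega⟩
            rw [show k + j - k = j by omega]
            rw [hbrec k, hbrec j]
            push_cast
            have d1 : ((k:ℝ)+1) ≠ 0 := by positivity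
            have d2 : ((j:ℝ)+1) ≠ 0 := by positivity
            field_simp
            ring
          -- edges
          have edge1 : ((m:ℝ)+2) * (b (m+2) * b 0) = ((m:ℝ)+1+lam) * (b (m+1) * b 0) := by
            rw [show m+2 = (m+1)+1 from rfl, hbrec (m+1)]
            have : ((m+1:ℕ):ℝ)+1 ≠ 0 := by positivity
            push_cast at this ⊢
            field_simp
            ring
          have edge2 : ((m:ℝ)+2) * (b 0 * b (m+2)) = ((m:ℝ)+1+lam) * (b 0 * b (m+1)) := by
            rw [show m+2 = (m+1)+1 from rfl, hbrec (m+1)]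
            push_cast
            field_simp
            ring
          have he1 : ((m:ℝ)+2) * (b (m+2) * b 0) * Real.cos (-(((m:ℝ)+2) * θ))
              = ((m:ℝ)+1+lam) * (b (m+1) * b 0) * Real.cos (-(((m:ℝ)+2) * θ)) := by
            rw [edge1]
          have he2 : ((m:ℝ)+2) * (b 0 * b (m+2)) * Real.cos (((m:ℝ)+2) * θ)
              = ((m:ℝ)+1+lam) * (b 0 * b (m+1)) * Real.cos (((m:ℝ)+2) * θ) := by
            rw [edge2]
          linarith [hmain, he1, he2]
        -- conclude from key
        simp only [gegenbauer]
        push_cast at h1 h0 ⊢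
        rw [h1, h0]
        rw [div_eq_iff (by positivity : ((m:ℝ)+2) ≠ 0)]
        push_cast at key
        linarith [key]

lemma gegenbauer_one (lam : ℝ) (n : ℕ) :
    gegenbauer lam n 1 = ∑ k ∈ Finset.range (n + 1), gegA lam k * gegA lam (n - k) := by
  have h := gegenbauer_cos_expansion lam n 0
  simpa using h

lemma gegenbauer_one_nonneg {lam : ℝ} (hlam : 0 < lam) (n : ℕ) :
    0 ≤ gegenbauer lam n 1 := by
  rw [gegenbauer_one]
  exact Finset.sum_nonneg fun k _ =>
    (mul_pos (gegA_pos hlam k) (gegA_pos hlam (n-k))).le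

lemma gegenbauer_cos_le {lam : ℝ} (hlam : 0 < lam) (n : ℕ) (θ : ℝ) :
    gegenbauer lam n (Real.cos θ) ≤ gegenbauer lam n 1 := by
  rw [gegenbauer_cos_expansion lam n θ, gegenbauer_one]
  refine Finset.sum_le_sum fun k _ => ?_
  exact mul_le_of_le_one_right
    (mul_pos (gegA_pos hlam k) (gegA_pos hlam (n-k))).le
    (Real.cos_le_one _)

lemma gegenbauer_lip {lam : ℝ} (hlam : 0 < lam) (n : ℕ) (θ : ℝ) :
    gegenbauer lam n 1 - gegenbauer lam n (Real.cos θ)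
      ≤ ((n:ℝ)*θ)^2/2 * gegenbauer lam n 1 := by
  rw [gegenbauer_cos_expansion lam n θ, gegenbauer_one, Finset.mul_sum, ← Finset.sum_sub_distrib]
  refine Finset.sum_le_sum fun k hk => ?_
  have hk' : k ≤ n := by simpa [Nat.lt_succ_iff] using Finset.mem_range.mp hk
  have haa : 0 ≤ gegA lam k * gegA lam (n-k) :=
    (mul_pos (gegA_pos hlam k) (gegA_pos hlam (n-k))).le
  have h1 : 1 - Real.cos (((n : ℝ) - 2 * (k : ℝ)) * θ)
      ≤ (((n : ℝ) - 2 * (k : ℝ)) * θ)^2 / 2 := by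
    have := Real.one_sub_sq_div_two_le_cos (x := ((n : ℝ) - 2 * (k : ℝ)) * θ)
    linarith
  have h2 : (((n : ℝ) - 2 * (k : ℝ)) * θ)^2 ≤ ((n:ℝ)*θ)^2 := by
    rw [mul_pow, mul_pow]
    have hkn : ((n : ℝ) - 2 * (k : ℝ))^2 ≤ (n:ℝ)^2 := by
      apply sq_le_sq'
      · have : (k:ℝ) ≤ (n:ℝ) := by exact_mod_cast hk'
        linarith
      · have : (0:ℝ) ≤ (k:ℝ) := Nat.cast_nonneg k
        linarith
    exact mul_le_mul_of_nonneg_right hkn (sq_nonneg θ)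
  calc gegA lam k * gegA lam (n-k) - gegA lam k * gegA lam (n-k) *
          Real.cos (((n : ℝ) - 2 * (k : ℝ)) * θ)
      = gegA lam k * gegA lam (n-k) * (1 - Real.cos (((n : ℝ) - 2 * (k : ℝ)) * θ)) := by ring
    _ ≤ gegA lam k * gegA lam (n-k) * (((n:ℝ)*θ)^2/2) := by
        apply mul_le_mul_of_nonneg_left _ haa
        calc 1 - Real.cos (((n : ℝ) - 2 * (k : ℝ)) * θ)
            ≤ (((n : ℝ) - 2 * (k : ℝ)) * θ)^2 / 2 := h1
          _ ≤ ((n:ℝ)*θ)^2/2 := by linarith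
    _ = ((n:ℝ)*θ)^2/2 * (gegA lam k * gegA lam (n-k)) := by ring

lemma geg_one_eq (e n : ℕ) :
    gegenbauer (((e:ℝ)+1)/2) n 1 = ((n+e).choose e : ℝ) := by
  induction n using Nat.strong_induction_on with
  | _ n ih =>
    match n with
    | 0 => simp [gegenbauer]
    | 1 =>
        simp only [gegenbauer]
        rw [Nat.add_comm 1 e, Nat.choose_succ_self_right]
        push_cast
        ring
    | (m+2) =>
        have h1 := ih (m+1) (by omega)
        have h0 := ih m (by omega)
        simp only [gegenbauer]
        rw [h1, h0, div_eq_iff (by positivity : ((m:ℝ)+2) ≠ 0)]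
        have sy : ∀ j : ℕ, (j+e).choose e = (j+e).choose j := by
          intro j
          rw [← Nat.choose_symm (by omega : j ≤ j+e), show j+e-j = e by omega]
        have na : (m+2) * ((m+2+e).choose e) = (m+2+e) * ((m+1+e).choose e) := by
          rw [sy (m+2), sy (m+1)]
          have h := Nat.add_one_mul_choose_eq (m+1+e) (m+1)
          rw [show m+1+e+1 = m+2+e by omega, show m+1+1 = m+2 from rfl] at h
          exact (Nat.mul_comm _ _).trans h.symm
        have nb : (m+1) * ((m+1+e).choose e) = (m+1+e) * ((m+e).choose e) := by
          rw [sy (m+1), sy m]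
          have h := Nat.add_one_mul_choose_eq (m+e) m
          rw [show m+e+1 = m+1+e by omega] at h
          exact (Nat.mul_comm _ _).trans h.symm
        have na' : ((m:ℝ)+2) * ((m+2+e).choose e : ℝ) = ((m:ℝ)+2+(e:ℝ)) * ((m+1+e).choose e : ℝ) := by
          exact_mod_cast na
        have nb' : ((m:ℝ)+1) * ((m+1+e).choose e : ℝ) = ((m:ℝ)+1+(e:ℝ)) * ((m+e).choose e : ℝ) := by
          exact_mod_cast nb
        push_cast at na' nb' ⊢
        linear_combination nb' - na'

lemma choose_lb (n r : ℕ) : ((n:ℝ)+1)^r ≤ ((n+r).choose r : ℝ) * (r.factorial : ℝ) := by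
  have h : ∀ r : ℕ, (n+1)^r ≤ (n+r).choose r * r.factorial := by
    intro r
    induction r with
    | zero => simp
    | succ r ihr =>
        have key : (n+r+1) * ((n+r).choose r) = (n+(r+1)).choose (r+1) * (r+1) := by
          have h := Nat.add_one_mul_choose_eq (n+r) r
          rw [show n+r+1 = n+(r+1) from rfl] at h
          exact h
        calc (n+1)^(r+1) = (n+1) * (n+1)^r := by ring
          _ ≤ (n+1) * ((n+r).choose r * r.factorial) := Nat.mul_le_mul_left _ ihr
          _ ≤ (n+r+1) * ((n+r).choose r) * r.factorial := by
              rw [← mul_assoc]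
              exact Nat.mul_le_mul_right _ (Nat.mul_le_mul_right _ (by omega))
          _ = (n+(r+1)).choose (r+1) * (r+1).factorial := by
              rw [key, Nat.factorial_succ]
              ring
  exact_mod_cast h r

lemma choose_ub (n r : ℕ) : ((n+r).choose r : ℝ) ≤ ((n:ℝ)+1)^r := by
  have h : ∀ r : ℕ, (n+r).choose r ≤ (n+1)^r := by
    intro r
    induction r with
    | zero => simp
    | succ r ihr =>
        have key : (n+(r+1)).choose (r+1) * (r+1) = (n+r+1) * ((n+r).choose r) := by
          have h := Nat.add_one_mul_choose_eq (n+r) r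
          rw [show n+r+1 = n+(r+1) from rfl] at h
          exact h.symm
        have h2 : (n+(r+1)).choose (r+1) * (r+1) ≤ (n+1)^(r+1) * (r+1) := by
          rw [key]
          calc (n+r+1) * ((n+r).choose r) ≤ (n+r+1) * (n+1)^r := Nat.mul_le_mul_left _ ihr
            _ ≤ ((n+1)*(r+1)) * (n+1)^r := Nat.mul_le_mul_right _ (by nlinarith)
            _ = (n+1)^(r+1) * (r+1) := by ring
        exact Nat.le_of_mul_le_mul_right h2 (by omega)
  exact_mod_cast h r

lemma cesaroA_eq (dd : ℕ) (j : ℕ) : cesaroA (dd:ℝ) j = ((j+dd).choose dd : ℝ) := by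
  unfold cesaroA
  rw [show (j:ℝ) + (dd:ℝ) + 1 = ((j+dd:ℕ):ℝ) + 1 by push_cast; ring,
    Real.Gamma_nat_eq_factorial, Real.Gamma_nat_eq_factorial,
    show (dd:ℝ) + 1 = ((dd:ℕ):ℝ) + 1 by push_cast; ring, Real.Gamma_nat_eq_factorial]
  rw [Nat.cast_choose ℝ (by omega : dd ≤ j + dd)]
  rw [show j + dd - dd = j by omega]
  ring

lemma cesaroA_pos (dd : ℕ) (j : ℕ) : 0 < cesaroA (dd:ℝ) j := by
  rw [cesaroA_eq]
  exact_mod_cast Nat.choose_pos (by omega : dd ≤ j + dd)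


lemma lam_pos (e : ℕ) : 0 < ((e:ℝ)+1)/2 := by positivity

lemma w_nonneg (e k : ℕ) : 0 ≤ ((k:ℝ) + ((e:ℝ)+1)/2) / (((e:ℝ)+1)/2) := by positivity

lemma coeff_nonneg (e L k : ℕ) :
    0 ≤ cesaroA ((e+2:ℕ):ℝ) (L-k) / cesaroA ((e+2:ℕ):ℝ) L :=
  (div_pos (cesaroA_pos (e+2) (L-k)) (cesaroA_pos (e+2) L)).le

lemma Kprop1 (e L : ℕ) (θ : ℝ) :
    cesaroK (((e:ℝ)+1)/2) ((e+2:ℕ):ℝ) L (Real.cos θ)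
      ≤ cesaroK (((e:ℝ)+1)/2) ((e+2:ℕ):ℝ) L 1 := by
  unfold cesaroK gegenbauerE
  refine Finset.sum_le_sum fun k _ => ?_
  refine mul_le_mul_of_nonneg_left ?_ (coeff_nonneg e L k)
  exact mul_le_mul_of_nonneg_left (gegenbauer_cos_le (lam_pos e) k θ) (w_nonneg e k)

lemma Kpos (e L : ℕ) : 0 ≤ cesaroK (((e:ℝ)+1)/2) ((e+2:ℕ):ℝ) L 1 := by
  unfold cesaroK gegenbauerE
  refine Finset.sum_nonneg fun k _ => ?_
  exact mul_nonneg (coeff_nonneg e L k)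
    (mul_nonneg (w_nonneg e k) (gegenbauer_one_nonneg (lam_pos e) k))

lemma Kprop2 (e L : ℕ) (θ : ℝ) :
    cesaroK (((e:ℝ)+1)/2) ((e+2:ℕ):ℝ) L 1
      - cesaroK (((e:ℝ)+1)/2) ((e+2:ℕ):ℝ) L (Real.cos θ)
      ≤ ((L:ℝ)*θ)^2/2 * cesaroK (((e:ℝ)+1)/2) ((e+2:ℕ):ℝ) L 1 := by
  unfold cesaroK gegenbauerE
  rw [Finset.mul_sum, ← Finset.sum_sub_distrib]
  refine Finset.sum_le_sum fun k hk => ?_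
  have hk' : k ≤ L := by simpa [Nat.lt_succ_iff] using Finset.mem_range.mp hk
  set lam := ((e:ℝ)+1)/2 with hlamdef
  have A0 : 0 ≤ cesaroA ((e+2:ℕ):ℝ) (L-k) / cesaroA ((e+2:ℕ):ℝ) L * (((k:ℝ)+lam)/lam) :=
    mul_nonneg (coeff_nonneg e L k) (w_nonneg e k)
  have hg0 : 0 ≤ gegenbauer lam k 1 := gegenbauer_one_nonneg (lam_pos e) k
  have lip := gegenbauer_lip (lam_pos e) k θ
  have hsq : ((k:ℝ)*θ)^2 ≤ ((L:ℝ)*θ)^2 := by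
    rw [mul_pow, mul_pow]
    apply mul_le_mul_of_nonneg_right _ (sq_nonneg θ)
    have : (k:ℝ) ≤ (L:ℝ) := by exact_mod_cast hk'
    nlinarith [Nat.cast_nonneg (α := ℝ) k]
  calc cesaroA ((e+2:ℕ):ℝ) (L-k) / cesaroA ((e+2:ℕ):ℝ) L * (((k:ℝ)+lam)/lam * gegenbauer lam k 1)
        - cesaroA ((e+2:ℕ):ℝ) (L-k) / cesaroA ((e+2:ℕ):ℝ) L * (((k:ℝ)+lam)/lam * gegenbauer lam k (Real.cos θ))
      = (cesaroA ((e+2:ℕ):ℝ) (L-k) / cesaroA ((e+2:ℕ):ℝ) L * (((k:ℝ)+lam)/lam))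
          * (gegenbauer lam k 1 - gegenbauer lam k (Real.cos θ)) := by ring
    _ ≤ (cesaroA ((e+2:ℕ):ℝ) (L-k) / cesaroA ((e+2:ℕ):ℝ) L * (((k:ℝ)+lam)/lam))
          * (((L:ℝ)*θ)^2/2 * gegenbauer lam k 1) := by
        apply mul_le_mul_of_nonneg_left _ A0
        calc gegenbauer lam k 1 - gegenbauer lam k (Real.cos θ)
            ≤ ((k:ℝ)*θ)^2/2 * gegenbauer lam k 1 := lip
          _ ≤ ((L:ℝ)*θ)^2/2 * gegenbauer lam k 1 := by
              apply mul_le_mul_of_nonneg_right _ hg0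
              linarith
    _ = ((L:ℝ)*θ)^2/2 * (cesaroA ((e+2:ℕ):ℝ) (L-k) / cesaroA ((e+2:ℕ):ℝ) L
          * (((k:ℝ)+lam)/lam * gegenbauer lam k 1)) := by ring

lemma Kub (e L : ℕ) :
    cesaroK (((e:ℝ)+1)/2) ((e+2:ℕ):ℝ) L 1 ≤ 2*((L:ℝ)+1)^(e+2) := by
  set lam := ((e:ℝ)+1)/2 with hlamdef
  have hterm : ∀ k ∈ Finset.range (L+1),
      cesaroA ((e+2:ℕ):ℝ) (L-k) / cesaroA ((e+2:ℕ):ℝ) L * (((k:ℝ)+lam)/lam * gegenbauer lam k 1)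
        ≤ 2*((L:ℝ)+1)^(e+1) := by
    intro k hk
    have hk' : k ≤ L := by simpa [Nat.lt_succ_iff] using Finset.mem_range.mp hk
    have hkL : (k:ℝ) ≤ (L:ℝ) := by exact_mod_cast hk'
    have hcoeff : cesaroA ((e+2:ℕ):ℝ) (L-k) / cesaroA ((e+2:ℕ):ℝ) L ≤ 1 := by
      rw [div_le_one (cesaroA_pos (e+2) L), cesaroA_eq, cesaroA_eq]
      exact_mod_cast Nat.choose_le_choose (e+2) (by omega : L-k+(e+2) ≤ L+(e+2))
    have hw : ((k:ℝ)+lam)/lam ≤ 2*((k:ℝ)+1) := by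
      rw [div_le_iff₀ (lam_pos e), hlamdef]
      nlinarith [Nat.cast_nonneg (α := ℝ) k, Nat.cast_nonneg (α := ℝ) e]
    have hg : gegenbauer lam k 1 ≤ ((L:ℝ)+1)^e := by
      rw [hlamdef, geg_one_eq]
      calc ((k+e).choose e : ℝ) ≤ ((k:ℝ)+1)^e := choose_ub k e
        _ ≤ ((L:ℝ)+1)^e := by
            apply pow_le_pow_left₀ (by positivity) (by linarith)
    have hg0 : 0 ≤ gegenbauer lam k 1 := gegenbauer_one_nonneg (lam_pos e) k
    calc cesaroA ((e+2:ℕ):ℝ) (L-k) / cesaroA ((e+2:ℕ):ℝ) L * (((k:ℝ)+lam)/lam * gegenbauer lam k 1)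
        ≤ 1 * (((k:ℝ)+lam)/lam * gegenbauer lam k 1) := by
          apply mul_le_mul_of_nonneg_right hcoeff
          exact mul_nonneg (w_nonneg e k) hg0
      _ = ((k:ℝ)+lam)/lam * gegenbauer lam k 1 := by ring
      _ ≤ (2*((k:ℝ)+1)) * ((L:ℝ)+1)^e := by
          apply mul_le_mul hw hg hg0 (by positivity)
      _ ≤ (2*((L:ℝ)+1)) * ((L:ℝ)+1)^e := by
          apply mul_le_mul_of_nonneg_right (by linarith) (by positivity)
      _ = 2*((L:ℝ)+1)^(e+1) := by ring
  calc cesaroK lam ((e+2:ℕ):ℝ) L 1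
      ≤ ∑ _k ∈ Finset.range (L+1), 2*((L:ℝ)+1)^(e+1) := Finset.sum_le_sum hterm
    _ = ((L:ℝ)+1) * (2*((L:ℝ)+1)^(e+1)) := by
        rw [Finset.sum_const, Finset.card_range, nsmul_eq_mul]
        push_cast; ring
    _ = 2*((L:ℝ)+1)^(e+2) := by ring

def lowC (e : ℕ) : ℝ := 2^(e+2)*4^(e+2)*((e+2).factorial : ℝ)*((e+1).factorial : ℝ)

lemma lowC_pos (e : ℕ) : 0 < lowC e := by unfold lowC; positivity

lemma Klb (e L : ℕ) :
    ((L:ℝ)+1)^(e+2)/lowC e ≤ cesaroK (((e:ℝ)+1)/2) ((e+2:ℕ):ℝ) L 1 := by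
  set lam := ((e:ℝ)+1)/2 with hlamdef
  set X := (L:ℝ)+1 with hX
  have hX1 : (1:ℝ) ≤ X := by rw [hX]; have := Nat.cast_nonneg (α := ℝ) L; linarith
  have hX0 : (0:ℝ) < X := by linarith
  set b : ℝ := ((X/2)^(e+2) / ((e+2).factorial : ℝ) / X^(e+2))
      * ((X/4)^(e+1) / (((e:ℝ)+1) * (e.factorial : ℝ))) with hbdef
  have hb0 : 0 ≤ b := by rw [hbdef]; positivity
  have hterm : ∀ k ∈ Finset.Ico (L/4) (L/2+1),
      b ≤ cesaroA ((e+2:ℕ):ℝ) (L-k) / cesaroA ((e+2:ℕ):ℝ) L * (((k:ℝ)+lam)/lam * gegenbauer lam k 1) := by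
    intro k hk
    obtain ⟨hk1, hk2⟩ := Finset.mem_Ico.mp hk
    have hkL : k ≤ L := by omega
    have hkR : (k:ℝ) ≤ (L:ℝ) := by exact_mod_cast hkL
    have hk4 : X/4 ≤ (k:ℝ)+1 := by
      rw [hX]
      have : L ≤ 4*k+3 := by omega
      have : (L:ℝ) ≤ 4*(k:ℝ)+3 := by exact_mod_cast this
      linarith
    have hk2' : X/2 ≤ ((L-k:ℕ):ℝ)+1 := by
      rw [hX, Nat.cast_sub hkL]
      have : 2*k ≤ L := by omega
      have : 2*(k:ℝ) ≤ (L:ℝ) := by exact_mod_cast this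
      linarith
    -- coefficient lower bound
    have hA1 : (X/2)^(e+2) / ((e+2).factorial : ℝ) ≤ cesaroA ((e+2:ℕ):ℝ) (L-k) := by
      rw [cesaroA_eq]
      rw [div_le_iff₀ (by positivity : (0:ℝ) < ((e+2).factorial : ℝ))]
      calc (X/2)^(e+2) ≤ (((L-k:ℕ):ℝ)+1)^(e+2) :=
            pow_le_pow_left₀ (by positivity) hk2' _
        _ ≤ ((L-k+(e+2)).choose (e+2) : ℝ) * ((e+2).factorial : ℝ) := choose_lb _ _
    have hA2 : cesaroA ((e+2:ℕ):ℝ) L ≤ X^(e+2) := by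
      rw [cesaroA_eq, hX]
      exact choose_ub L (e+2)
    have hcoeff : (X/2)^(e+2) / ((e+2).factorial : ℝ) / X^(e+2)
        ≤ cesaroA ((e+2:ℕ):ℝ) (L-k) / cesaroA ((e+2:ℕ):ℝ) L :=
      div_le_div₀ (cesaroA_pos (e+2) (L-k)).le hA1 (cesaroA_pos (e+2) L) hA2
    have hw : ((k:ℝ)+1)/((e:ℝ)+1) ≤ ((k:ℝ)+lam)/lam := by
      rw [div_le_div_iff₀ (by positivity) (lam_pos e), hlamdef]
      nlinarith [Nat.cast_nonneg (α := ℝ) k, Nat.cast_nonneg (α := ℝ) e]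
    have hgk : ((k:ℝ)+1)^e/(e.factorial:ℝ) ≤ gegenbauer lam k 1 := by
      rw [hlamdef, geg_one_eq, div_le_iff₀ (by positivity : (0:ℝ) < (e.factorial:ℝ))]
      exact choose_lb k e
    have hwg : (X/4)^(e+1) / (((e:ℝ)+1) * (e.factorial : ℝ))
        ≤ ((k:ℝ)+lam)/lam * gegenbauer lam k 1 := by
      have s1 : (X/4)^(e+1) / (((e:ℝ)+1) * (e.factorial : ℝ))
          ≤ ((k:ℝ)+1)^(e+1) / (((e:ℝ)+1) * (e.factorial : ℝ)) :=
        div_le_div₀ (by positivity) (pow_le_pow_left₀ (by positivity) hk4 _)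
          (by positivity) le_rfl
      have s2 : ((k:ℝ)+1)^(e+1) / (((e:ℝ)+1) * (e.factorial : ℝ))
          = (((k:ℝ)+1)/((e:ℝ)+1)) * (((k:ℝ)+1)^e/(e.factorial:ℝ)) := by
        rw [pow_succ]
        field_simp
      have s3 : (((k:ℝ)+1)/((e:ℝ)+1)) * (((k:ℝ)+1)^e/(e.factorial:ℝ))
          ≤ ((k:ℝ)+lam)/lam * gegenbauer lam k 1 :=
        mul_le_mul hw hgk (by positivity) (w_nonneg e k)
      rw [s2] at s1
      exact s1.trans s3
    rw [hbdef]
    exact mul_le_mul hcoeff hwg (by positivity) (coeff_nonneg e L k)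
  -- summation
  have hsubset : Finset.Ico (L/4) (L/2+1) ⊆ Finset.range (L+1) := by
    intro x hx
    simp only [Finset.mem_Ico] at hx
    simp only [Finset.mem_range]
    omega
  have tnonneg : ∀ k ∈ Finset.range (L+1), k ∉ Finset.Ico (L/4) (L/2+1) →
      0 ≤ cesaroA ((e+2:ℕ):ℝ) (L-k) / cesaroA ((e+2:ℕ):ℝ) L * (((k:ℝ)+lam)/lam * gegenbauer lam k 1) := by
    intro k _ _
    exact mul_nonneg (coeff_nonneg e L k)
      (mul_nonneg (w_nonneg e k) (gegenbauer_one_nonneg (lam_pos e) k))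
  have hsum1 : ∑ k ∈ Finset.Ico (L/4) (L/2+1),
        cesaroA ((e+2:ℕ):ℝ) (L-k) / cesaroA ((e+2:ℕ):ℝ) L * (((k:ℝ)+lam)/lam * gegenbauer lam k 1)
      ≤ cesaroK lam ((e+2:ℕ):ℝ) L 1 :=
    Finset.sum_le_sum_of_subset_of_nonneg hsubset tnonneg
  have hsum2 : (Finset.Ico (L/4) (L/2+1)).card • b
      ≤ ∑ k ∈ Finset.Ico (L/4) (L/2+1),
        cesaroA ((e+2:ℕ):ℝ) (L-k) / cesaroA ((e+2:ℕ):ℝ) L * (((k:ℝ)+lam)/lam * gegenbauer lam k 1) :=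
    Finset.card_nsmul_le_sum _ _ _ hterm
  have hcard : X/4 ≤ ((Finset.Ico (L/4) (L/2+1)).card : ℝ) := by
    rw [Nat.card_Ico, hX]
    have h4 : L+1 ≤ 4*(L/2+1 - L/4) := by omega
    have h4' : (L:ℝ)+1 ≤ 4*((L/2+1 - L/4 : ℕ):ℝ) := by exact_mod_cast h4
    linarith
  have hmain : (X/4) * b ≤ cesaroK lam ((e+2:ℕ):ℝ) L 1 := by
    have := hsum2.trans hsum1
    rw [nsmul_eq_mul] at this
    exact le_trans (mul_le_mul_of_nonneg_right hcard hb0) this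
  refine le_trans (le_of_eq ?_) hmain
  rw [hbdef, hX]
  unfold lowC
  rw [div_pow, div_pow]
  rw [show ((e+1).factorial : ℝ) = ((e:ℝ)+1) * (e.factorial : ℝ) by
    rw [Nat.factorial_succ]; push_cast; ring]
  have hXe : (0:ℝ) < ((L:ℝ)+1)^(e+2) := by positivity
  field_simp
  ring

lemma avg_ub (f : ℕ → ℝ) (C : ℝ) (p n : ℕ) (hC : 0 ≤ C)
    (h : ∀ j : ℕ, f j ≤ C*((j:ℝ)+1)^p) :
    (1/((n:ℝ)+1)) * ∑ j ∈ Finset.range (n+1), f j ≤ C*((n:ℝ)+1)^p := by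
  have hstep : ∀ j ∈ Finset.range (n+1), f j ≤ C*((n:ℝ)+1)^p := by
    intro j hj
    have hj' : j ≤ n := by simpa [Nat.lt_succ_iff] using Finset.mem_range.mp hj
    refine (h j).trans (mul_le_mul_of_nonneg_left ?_ hC)
    apply pow_le_pow_left₀ (by positivity)
    have : (j:ℝ) ≤ (n:ℝ) := by exact_mod_cast hj'
    linarith
  have hsum : ∑ j ∈ Finset.range (n+1), f j ≤ ((n:ℝ)+1) * (C*((n:ℝ)+1)^p) := by
    calc ∑ j ∈ Finset.range (n+1), f j ≤ ∑ _j ∈ Finset.range (n+1), C*((n:ℝ)+1)^p :=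
          Finset.sum_le_sum hstep
      _ = ((n:ℝ)+1) * (C*((n:ℝ)+1)^p) := by
          rw [Finset.sum_const, Finset.card_range, nsmul_eq_mul]; push_cast; ring
  have hpos : (0:ℝ) < (n:ℝ)+1 := by positivity
  calc (1/((n:ℝ)+1)) * ∑ j ∈ Finset.range (n+1), f j
      ≤ (1/((n:ℝ)+1)) * (((n:ℝ)+1) * (C*((n:ℝ)+1)^p)) :=
        mul_le_mul_of_nonneg_left hsum (by positivity)
    _ = C*((n:ℝ)+1)^p := by field_simp
lemma avg_lb (f : ℕ → ℝ) (c : ℝ) (p n : ℕ) (hc : 0 ≤ c) (h0 : ∀ j, 0 ≤ f j)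
    (h : ∀ j : ℕ, c*((j:ℝ)+1)^p ≤ f j) :
    c/2^(p+1) * ((n:ℝ)+1)^p ≤ (1/((n:ℝ)+1)) * ∑ j ∈ Finset.range (n+1), f j := by
  set X := (n:ℝ)+1 with hX
  have hX0 : (0:ℝ) < X := by positivity
  have hterm : ∀ j ∈ Finset.Ico (n/2) (n+1), c*(X/2)^p ≤ f j := by
    intro j hj
    obtain ⟨hj1, hj2⟩ := Finset.mem_Ico.mp hj
    refine le_trans ?_ (h j)
    apply mul_le_mul_of_nonneg_left _ hc
    apply pow_le_pow_left₀ (by positivity)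
    have : n ≤ 2*j+1 := by omega
    have : (n:ℝ) ≤ 2*(j:ℝ)+1 := by exact_mod_cast this
    rw [hX]; linarith
  have hsubset : Finset.Ico (n/2) (n+1) ⊆ Finset.range (n+1) := by
    intro x hx
    simp only [Finset.mem_Ico] at hx
    simp only [Finset.mem_range]
    omega
  have hsum1 : ∑ j ∈ Finset.Ico (n/2) (n+1), f j ≤ ∑ j ∈ Finset.range (n+1), f j :=
    Finset.sum_le_sum_of_subset_of_nonneg hsubset (fun j _ _ => h0 j)
  have hsum2 : (Finset.Ico (n/2) (n+1)).card • (c*(X/2)^p) ≤ ∑ j ∈ Finset.Ico (n/2) (n+1), f j :=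
    Finset.card_nsmul_le_sum _ _ _ hterm
  have hcard : X/2 ≤ ((Finset.Ico (n/2) (n+1)).card : ℝ) := by
    rw [Nat.card_Ico, hX]
    have h4 : n+1 ≤ 2*(n+1 - n/2) := by omega
    have h4' : (n:ℝ)+1 ≤ 2*((n+1 - n/2 : ℕ):ℝ) := by exact_mod_cast h4
    linarith
  have hb0 : 0 ≤ c*(X/2)^p := by positivity
  have hmain : (X/2) * (c*(X/2)^p) ≤ ∑ j ∈ Finset.range (n+1), f j := by
    have := hsum2.trans hsum1
    rw [nsmul_eq_mul] at this
    exact le_trans (mul_le_mul_of_nonneg_right hcard hb0) this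
  have heq : c/2^(p+1) * X^p = (1/X) * ((X/2) * (c*(X/2)^p)) := by
    rw [div_pow, pow_succ]
    rw [mul_comm ((2:ℝ)^p) 2, ← div_div]
    field_simp
  rw [heq]
  exact mul_le_mul_of_nonneg_left hmain (by positivity)

lemma avg_prop2 (F : ℕ → ℝ → ℝ) (n : ℕ) (θ : ℝ)
    (h : ∀ j, j ≤ n → F j 1 - F j (Real.cos θ) ≤ ((j:ℝ)*θ)^2/2 * F j 1)
    (h1 : ∀ j, 0 ≤ F j 1) :
    (1/((n:ℝ)+1)) * ∑ j ∈ Finset.range (n+1), F j 1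
      - (1/((n:ℝ)+1)) * ∑ j ∈ Finset.range (n+1), F j (Real.cos θ)
      ≤ ((n:ℝ)*θ)^2/2 * ((1/((n:ℝ)+1)) * ∑ j ∈ Finset.range (n+1), F j 1) := by
  have hstep : ∀ j ∈ Finset.range (n+1),
      F j 1 - F j (Real.cos θ) ≤ ((n:ℝ)*θ)^2/2 * F j 1 := by
    intro j hj
    have hj' : j ≤ n := by simpa [Nat.lt_succ_iff] using Finset.mem_range.mp hj
    refine (h j hj').trans (mul_le_mul_of_nonneg_right ?_ (h1 j))
    have hjn : (j:ℝ) ≤ (n:ℝ) := by exact_mod_cast hj'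
    have : ((j:ℝ)*θ)^2 ≤ ((n:ℝ)*θ)^2 := by
      rw [mul_pow, mul_pow]
      apply mul_le_mul_of_nonneg_right _ (sq_nonneg θ)
      nlinarith [Nat.cast_nonneg (α := ℝ) j]
    linarith
  calc (1/((n:ℝ)+1)) * ∑ j ∈ Finset.range (n+1), F j 1
        - (1/((n:ℝ)+1)) * ∑ j ∈ Finset.range (n+1), F j (Real.cos θ)
      = (1/((n:ℝ)+1)) * ∑ j ∈ Finset.range (n+1), (F j 1 - F j (Real.cos θ)) := by
        rw [Finset.sum_sub_distrib]; ring
    _ ≤ (1/((n:ℝ)+1)) * ∑ j ∈ Finset.range (n+1), ((n:ℝ)*θ)^2/2 * F j 1 :=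
        mul_le_mul_of_nonneg_left (Finset.sum_le_sum hstep) (by positivity)
    _ = ((n:ℝ)*θ)^2/2 * ((1/((n:ℝ)+1)) * ∑ j ∈ Finset.range (n+1), F j 1) := by
        rw [← Finset.mul_sum]; ring

/-- For each of the kernels `F_n ∈ {K_n^d, G_n^{d+1}, G_n^{d+2}}`: the sup norm of
`θ ↦ F_n(cos θ)` over `[0,π]` is attained at `θ = 0`, i.e. equals `F_n(1)`, it is comparable
to `(n+1)^d`, and `F_n(cos θ) ≥ (1/2)‖F_n‖_∞` for `0 ≤ θ ≤ 1/(2n)`. -/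
theorem kernel_near_diagonal (d : ℕ) (hd : 2 ≤ d) :
    ∃ c₁ c₂ : ℝ, 0 < c₁ ∧ 0 < c₂ ∧ ∀ (n : ℕ) (F : ℝ → ℝ),
      (F = cesaroK (((d : ℝ) - 1) / 2) (d : ℝ) n ∨ F = kernelG1 d n ∨ F = kernelG2 d n) →
      F 1 = sSup ((fun θ : ℝ => F (Real.cos θ)) '' Set.Icc 0 π) ∧
      c₁ * ((n : ℝ) + 1) ^ d ≤ F 1 ∧ F 1 ≤ c₂ * ((n : ℝ) + 1) ^ d ∧
      ∀ θ : ℝ, 0 ≤ θ → θ ≤ 1 / (2 * (n : ℝ)) →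
        (1 / 2) * sSup ((fun θ : ℝ => F (Real.cos θ)) '' Set.Icc 0 π) ≤ F (Real.cos θ) := by
  obtain ⟨e, rfl⟩ : ∃ e, d = e + 2 := ⟨d - 2, by omega⟩
  have hlameq : (((e+2:ℕ):ℝ)-1)/2 = ((e:ℝ)+1)/2 := by push_cast; ring
  set c₁ : ℝ := (1/lowC e)/(2^(e+3)*2^(e+3)) with hc₁def
  have hc₁ : 0 < c₁ := by
    rw [hc₁def]
    have := lowC_pos e
    positivity
  refine ⟨c₁, 2, hc₁, by norm_num, ?_⟩
  intro n F hF
  -- G1 unfolding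
  have hG1eq : ∀ (m : ℕ) (t : ℝ), kernelG1 (e+2) m t
      = (1/((m:ℝ)+1)) * ∑ j ∈ Finset.range (m+1), cesaroK (((e:ℝ)+1)/2) ((e+2:ℕ):ℝ) j t := by
    intro m t
    simp only [kernelG1, hlameq]
  -- G1 facts
  have G1pos : ∀ m : ℕ, 0 ≤ kernelG1 (e+2) m 1 := by
    intro m
    rw [hG1eq]
    exact mul_nonneg (by positivity) (Finset.sum_nonneg fun j _ => Kpos e j)
  have G1lb : ∀ m : ℕ, (1/lowC e)/2^(e+3) * ((m:ℝ)+1)^(e+2) ≤ kernelG1 (e+2) m 1 := by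
    intro m
    rw [hG1eq]
    refine le_trans (le_of_eq ?_) (avg_lb (fun j => cesaroK (((e:ℝ)+1)/2) ((e+2:ℕ):ℝ) j 1)
      (1/lowC e) (e+2) m (by have := lowC_pos e; positivity) (fun j => Kpos e j) (fun j => ?_))
    · rfl
    · refine le_trans (le_of_eq ?_) (Klb e j)
      rw [div_eq_mul_one_div ((((j:ℝ))+1)^(e+2)) (lowC e)]
      ring
  have G1ub : ∀ m : ℕ, kernelG1 (e+2) m 1 ≤ 2 * ((m:ℝ)+1)^(e+2) := by
    intro m
    rw [hG1eq]
    exact avg_ub _ 2 (e+2) m (by norm_num) (fun j => Kub e j)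
  have G1prop1 : ∀ (m : ℕ) (θ : ℝ), kernelG1 (e+2) m (Real.cos θ) ≤ kernelG1 (e+2) m 1 := by
    intro m θ
    rw [hG1eq, hG1eq]
    exact mul_le_mul_of_nonneg_left (Finset.sum_le_sum fun j _ => Kprop1 e j θ) (by positivity)
  have G1prop2 : ∀ (m : ℕ) (θ : ℝ), kernelG1 (e+2) m 1 - kernelG1 (e+2) m (Real.cos θ)
      ≤ ((m:ℝ)*θ)^2/2 * kernelG1 (e+2) m 1 := by
    intro m θ
    rw [hG1eq, hG1eq]
    exact avg_prop2 (fun j t => cesaroK (((e:ℝ)+1)/2) ((e+2:ℕ):ℝ) j t) m θ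
      (fun j _ => Kprop2 e j θ) (fun j => Kpos e j)
  -- G2 facts
  have hG2eq : ∀ (t : ℝ), kernelG2 (e+2) n t
      = (1/((n:ℝ)+1)) * ∑ j ∈ Finset.range (n+1), kernelG1 (e+2) j t := fun t => rfl
  have main : (∀ θ, F (Real.cos θ) ≤ F 1) ∧ (c₁*((n:ℝ)+1)^(e+2) ≤ F 1)
      ∧ (F 1 ≤ 2*((n:ℝ)+1)^(e+2))
      ∧ (∀ θ, F 1 - F (Real.cos θ) ≤ ((n:ℝ)*θ)^2/2 * F 1) := by
    rcases hF with hF | hF | hF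
    · have hF' : F = cesaroK (((e:ℝ)+1)/2) ((e+2:ℕ):ℝ) n := by rw [hF, hlameq]
      subst hF'
      refine ⟨fun θ => Kprop1 e n θ, ?_, Kub e n, fun θ => Kprop2 e n θ⟩
      refine le_trans ?_ (Klb e n)
      rw [div_eq_mul_one_div ((((n:ℝ))+1)^(e+2)) (lowC e)]
      have h1 : c₁ ≤ 1/lowC e := by
        rw [hc₁def]
        apply div_le_self (by have := lowC_pos e; positivity)
        have h2 : (1:ℝ) ≤ 2^(e+3) := one_le_pow₀ (by norm_num)
        nlinarith
      nlinarith [pow_nonneg (by positivity : (0:ℝ) ≤ (n:ℝ)+1) (e+2)]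
    · subst hF
      refine ⟨fun θ => G1prop1 n θ, ?_, G1ub n, fun θ => G1prop2 n θ⟩
      refine le_trans ?_ (G1lb n)
      have h1 : c₁ ≤ (1/lowC e)/2^(e+3) := by
        rw [hc₁def, div_div, div_div]
        apply one_div_le_one_div_of_le (by have := lowC_pos e; positivity)
        have h2 : (1:ℝ) ≤ 2^(e+3) := one_le_pow₀ (by norm_num)
        nlinarith [lowC_pos e, mul_pos (lowC_pos e) (show (0:ℝ) < 2^(e+3) by positivity)]
      exact mul_le_mul_of_nonneg_right h1 (by positivity)
    · subst hF
      have p1 : ∀ θ, kernelG2 (e+2) n (Real.cos θ) ≤ kernelG2 (e+2) n 1 := by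
        intro θ
        rw [hG2eq, hG2eq]
        exact mul_le_mul_of_nonneg_left (Finset.sum_le_sum fun j _ => G1prop1 j θ) (by positivity)
      have p2 : ∀ θ, kernelG2 (e+2) n 1 - kernelG2 (e+2) n (Real.cos θ)
          ≤ ((n:ℝ)*θ)^2/2 * kernelG2 (e+2) n 1 := by
        intro θ
        rw [hG2eq, hG2eq]
        exact avg_prop2 (fun j t => kernelG1 (e+2) j t) n θ (fun j _ => G1prop2 j θ) G1pos
      have lb : c₁*((n:ℝ)+1)^(e+2) ≤ kernelG2 (e+2) n 1 := by
        rw [hG2eq]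
        refine le_trans (le_of_eq ?_) (avg_lb (fun j => kernelG1 (e+2) j 1)
          ((1/lowC e)/2^(e+3)) (e+2) n (by have := lowC_pos e; positivity) G1pos G1lb)
        rw [hc₁def]
        ring
      have ub : kernelG2 (e+2) n 1 ≤ 2*((n:ℝ)+1)^(e+2) := by
        rw [hG2eq]
        exact avg_ub _ 2 (e+2) n (by norm_num) G1ub
      exact ⟨p1, lb, ub, p2⟩
  obtain ⟨P1, LB, UB, P2⟩ := main
  have hF1 : 0 ≤ F 1 := le_trans (by positivity) LB
  have hmem : F 1 ∈ (fun θ : ℝ => F (Real.cos θ)) '' Set.Icc 0 π :=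
    ⟨0, ⟨le_refl (0:ℝ), Real.pi_pos.le⟩, by simp⟩
  have hsup : sSup ((fun θ : ℝ => F (Real.cos θ)) '' Set.Icc 0 π) = F 1 := by
    apply IsGreatest.csSup_eq
    refine ⟨hmem, ?_⟩
    rintro y ⟨θ, -, rfl⟩
    exact P1 θ
  refine ⟨hsup.symm, LB, UB, ?_⟩
  intro θ hθ0 hθ1
  rw [hsup]
  have hsq : ((n:ℝ)*θ)^2 ≤ 1/4 := by
    rcases Nat.eq_zero_or_pos n with hn | hn
    · subst hn; norm_num
    · have hn' : (0:ℝ) < (n:ℝ) := by exact_mod_cast hn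
      have hle : (n:ℝ)*θ ≤ 1/2 := by
        have := mul_le_mul_of_nonneg_left hθ1 hn'.le
        calc (n:ℝ)*θ ≤ (n:ℝ)*(1/(2*(n:ℝ))) := this
          _ = 1/2 := by
            rw [mul_one_div, div_eq_div_iff (by positivity) (by norm_num)]
            ring
      have h0' : 0 ≤ (n:ℝ)*θ := by positivity
      nlinarith
  have hP := P2 θ
  have : ((n:ℝ)*θ)^2/2 * F 1 ≤ (1/8) * F 1 := by
    apply mul_le_mul_of_nonneg_right _ hF1
    linarith
  linarith
end
end

section
/- Let (M,g) be a smooth compact d-dimensional Riemannian manifold without boundary with Laplace eigenfunctions (φ_k) and eigenvalues (λ_k). For X ∈ ℕ large and t > 0 with X^{2/d} t ≫ 1, the tail of the heat kernel expansion satisfies, for all x, y ∈ M, | Σ_{k=X+1}^{∞} e^{−λ_k t} φ_k(x) φ_k(y) | ≤ C_{(M,g)} t^{−(d−1/2)} Γ(d − 1/2, c X^{2/d} t), where Γ(s, a) = ∫_a^∞ u^{s−1} e^{−u} du is the upper incomplete Gamma function and c, C_{(M,g)} > 0 depend only on (M,g). -/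
open MeasureTheory Finset Real
open scoped RealInnerProductSpace BigOperators

noncomputable section

open scoped Manifold

/-- An abstract packaging of the spectral data of the Laplace–Beltrami operator `−Δ_g` on a
smooth compact `d`-dimensional Riemannian manifold `(M,g)` without boundary, with Riemannian
volume measure `μ`: the `L²(μ)`-normalized eigenfunctions `φ_0, φ_1, …` (with `φ_0` constant)
and the eigenvalues `0 = λ_0 ≤ λ_1 ≤ ⋯` arranged in increasing order.  Since Mathlib does not
yet have the Laplace–Beltrami operator, we characterize this data by its standard properties:
orthonormality, Weyl's law, Hörmander's `L^∞` eigenfunction bound, and the short-time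
on-diagonal lower bound for the heat kernel `p_t(x,x) = Σ_k e^{−λ_k t} φ_k(x)²`. -/
structure IsLaplaceEigensystem {M : Type*} [MeasurableSpace M] (d : ℕ)
    (mu : Measure M) (phi : ℕ → M → ℝ) (lam : ℕ → ℝ) : Prop where
  lam_zero : lam 0 = 0
  lam_mono : Monotone lam
  phi_zero_const : ∀ x y : M, phi 0 x = phi 0 y
  orthonormal : ∀ j k : ℕ, ∫ x, phi j x * phi k x ∂mu = if j = k then 1 else 0
  weyl : ∃ c C : ℝ, 0 < c ∧ 0 < C ∧ ∀ k : ℕ,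
    c * (k : ℝ) ^ ((2 : ℝ) / d) ≤ lam k ∧ lam k ≤ C * ((k : ℝ) + 1) ^ ((2 : ℝ) / d)
  hormander : ∃ C : ℝ, 0 < C ∧ ∀ (k : ℕ) (x : M),
    |phi k x| ≤ C * (lam k + 1) ^ (((d : ℝ) - 1) / 4)
  heat_diag_lower : ∃ c t0 : ℝ, 0 < c ∧ 0 < t0 ∧ ∀ t : ℝ, 0 < t → t < t0 → ∀ x : M,
    c * t ^ (-(d : ℝ) / 2) ≤ ∑' k : ℕ, Real.exp (-(lam k) * t) * phi k x ^ 2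

/-- The upper incomplete Gamma function `Γ(s, a) = ∫_a^∞ u^{s−1} e^{−u} du`. -/
def upperIncGamma (s a : ℝ) : ℝ := ∫ u in Set.Ioi a, u ^ (s - 1) * Real.exp (-u)

/-!
Weyl's law gives `λ_K ≥ c K^{2/d}`, and since then `λ_K ≥ c` for `K ≥ 1`, Hörmander's bound gives
`|φ_K(x) φ_K(y)| ≲ λ_K^{(d-1)/2}`. For `K = X + 1 + k` the Weyl bound splits `λ_K t` into a part
`≥ 2a`, with `a = (c/4) X^{2/d} t`, and a part `≥ 2 (c/4) t (k+1)^{2/d}`. As `μ ↦ μ^m e^{-μ/2}` is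
decreasing for `μ ≥ 2m`, the `K`-th term is at most
`t^{-(d-1)/2} (2a)^{(d-1)/2} e^{-2a} e^{-(c/4) t (k+1)^{2/d}}`. The integral test sums the last factor
to `O(t^{-d/2})`, and `a^{(d-1)/2} e^{-2a} ≲ Γ(d - 1/2, a)` for `a ≥ 1` by comparing `Γ(d - 1/2, a)`
with the integral over `[a, a + 1]`.
-/

lemma rpow_mul_exp_neg_mul_le_of_le {m τ x y : ℝ} (hm : 0 ≤ m) (hy : 0 < y) (hmy : m ≤ τ * y)
    (hyx : y ≤ x) : x ^ m * exp (-(τ * x)) ≤ y ^ m * exp (-(τ * y)) := by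
  have hx : 0 < x := hy.trans_le hyx
  have hratio : (x / y) ^ m ≤ exp (τ * (x - y)) := by
    rw [rpow_def_of_pos (div_pos hx hy), exp_le_exp]
    calc log (x / y) * m ≤ (x / y - 1) * m := by
          gcongr; exact log_le_sub_one_of_pos (div_pos hx hy)
      _ = (x - y) * (m / y) := by field_simp
      _ ≤ (x - y) * τ :=
          mul_le_mul_of_nonneg_left ((div_le_iff₀ hy).2 hmy) (by linarith)
      _ = τ * (x - y) := mul_comm _ _
  calc x ^ m * exp (-(τ * x)) = y ^ m * (x / y) ^ m * exp (-(τ * x)) := by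
        rw [div_rpow hx.le hy.le]; field_simp
    _ ≤ y ^ m * exp (τ * (x - y)) * exp (-(τ * x)) := by gcongr
    _ = y ^ m * exp (-(τ * y)) := by rw [mul_assoc, ← exp_add]; ring_nf

lemma rpow_mul_exp_neg_le_of_two_mul_add_two_mul_le {m a b μ : ℝ} (hm : 0 ≤ m) (ha : 0 < a)
    (hma : m ≤ a) (hb : 0 ≤ b) (hμ : 2 * a + 2 * b ≤ μ) :
    μ ^ m * exp (-μ) ≤ (2 * a) ^ m * exp (-(2 * a)) * exp (-b) := by
  have hhalf : μ ^ m * exp (-(2⁻¹ * μ)) ≤ (2 * a) ^ m * exp (-(2⁻¹ * (2 * a))) :=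
    rpow_mul_exp_neg_mul_le_of_le hm (by positivity) (by linarith) (by linarith)
  calc μ ^ m * exp (-μ) = μ ^ m * exp (-(2⁻¹ * μ)) * exp (-(2⁻¹ * μ)) := by
        rw [mul_assoc, ← exp_add]; ring_nf
    _ ≤ (2 * a) ^ m * exp (-(2⁻¹ * (2 * a))) * exp (-(a + b)) := by
        gcongr; linarith
    _ = (2 * a) ^ m * exp (-(2 * a)) * exp (-b) := by
        rw [mul_assoc, mul_assoc, ← exp_add, ← exp_add]; ring_nf

lemma inv_two_mul_rpow_le_rpow {r a u : ℝ} (hr : -1 ≤ r) (ha : 0 < a) (hau : a ≤ u)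
    (hu : u ≤ 2 * a) : 2⁻¹ * a ^ r ≤ u ^ r := by
  rcases le_or_gt 0 r with hr0 | hr0
  · calc 2⁻¹ * a ^ r ≤ a ^ r := by linarith [rpow_nonneg ha.le r]
      _ ≤ u ^ r := by gcongr
  · have htwo : (2:ℝ)⁻¹ ≤ 2 ^ r := by
      rw [← rpow_neg_one]; exact rpow_le_rpow_of_exponent_le one_le_two hr
    calc 2⁻¹ * a ^ r ≤ 2 ^ r * a ^ r := by gcongr
      _ = (2 * a) ^ r := (mul_rpow zero_le_two ha.le).symm
      _ ≤ u ^ r := rpow_le_rpow_of_nonpos (ha.trans_le hau) hu hr0.le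

lemma rpow_mul_exp_neg_le_two_mul_upperIncGamma {s a : ℝ} (hs : 0 < s) (ha : 1 ≤ a) :
    a ^ (s - 1) * exp (-(a + 1)) ≤ 2 * upperIncGamma s a := by
  have ha0 : 0 < a := one_pos.trans_le ha
  have hint : IntegrableOn (fun u : ℝ => u ^ (s - 1) * exp (-u)) (Set.Ioi a) :=
    ((GammaIntegral_convergent hs).congr_fun (fun _ _ => mul_comm _ _) measurableSet_Ioi).mono_set
      (Set.Ioi_subset_Ioi ha0.le)
  have hpoint : ∀ u ∈ Set.Ioc a (a + 1),
      2⁻¹ * (a ^ (s - 1) * exp (-(a + 1))) ≤ u ^ (s - 1) * exp (-u) := fun u hu => by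
    rw [← mul_assoc]
    exact mul_le_mul (inv_two_mul_rpow_le_rpow (by linarith) ha0 hu.1.le (by linarith [hu.2]))
      (exp_le_exp.2 (neg_le_neg hu.2)) (exp_nonneg _) (rpow_nonneg (ha0.trans hu.1).le _)
  have hunit : ∫ u in Set.Ioc a (a + 1), u ^ (s - 1) * exp (-u) ≤ upperIncGamma s a :=
    setIntegral_mono_set hint
      (ae_restrict_of_forall_mem measurableSet_Ioi fun u hu => by
        have : 0 < u := ha0.trans hu
        positivity)
      Set.Ioc_subset_Ioi_self.eventuallyLE
  have hlow := setIntegral_ge_of_const_le_real measurableSet_Ioc measure_Ioc_lt_top.ne hpoint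
    (hint.mono_set Set.Ioc_subset_Ioi_self)
  rw [measureReal_def, Real.volume_Ioc, add_sub_cancel_left, ENNReal.toReal_ofReal zero_le_one,
    mul_one] at hlow
  linarith

lemma rpow_mul_exp_neg_two_mul_le_upperIncGamma {r s a : ℝ} (hs : 0 < s) (hrs : r ≤ s)
    (ha : 1 ≤ a) : a ^ r * exp (-(2 * a)) ≤ 2 * upperIncGamma s a := by
  have ha0 : 0 < a := one_pos.trans_le ha
  have hpow : a ^ r ≤ a ^ (s - 1) * exp (a - 1) :=
    calc a ^ r ≤ a ^ (s - 1 + 1) := rpow_le_rpow_of_exponent_le ha (by linarith)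
      _ = a ^ (s - 1) * a := by rw [rpow_add ha0, rpow_one]
      _ ≤ a ^ (s - 1) * exp (a - 1) := by gcongr; linarith [add_one_le_exp (a - 1)]
  calc a ^ r * exp (-(2 * a)) ≤ a ^ (s - 1) * exp (a - 1) * exp (-(2 * a)) := by gcongr
    _ = a ^ (s - 1) * exp (-(a + 1)) := by rw [mul_assoc, ← exp_add]; ring_nf
    _ ≤ 2 * upperIncGamma s a := rpow_mul_exp_neg_le_two_mul_upperIncGamma hs ha

section ExpNegMulRpowSeries

variable {p b : ℝ}

lemma antitoneOn_exp_neg_mul_rpow (hp : 0 < p) (hb : 0 < b) :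
    AntitoneOn (fun u : ℝ => exp (-b * u ^ p)) (Set.Ici 0) := fun u hu v _ huv => by
  simp only [neg_mul, exp_le_exp, neg_le_neg_iff]
  gcongr

lemma integrableOn_exp_neg_mul_rpow (hp : 0 < p) (hb : 0 < b) :
    IntegrableOn (fun u : ℝ => exp (-b * u ^ p)) (Set.Ioi 0) := by
  simpa using integrableOn_rpow_mul_exp_neg_mul_rpow neg_one_lt_zero hp hb

lemma summable_exp_neg_mul_add_one_rpow (hp : 0 < p) (hb : 0 < b) :
    Summable fun n : ℕ => exp (-b * ((n : ℝ) + 1) ^ p) := by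
  have h := (antitoneOn_exp_neg_mul_rpow hp hb).summable_of_integrableOn_Ioi_zero
    (integrableOn_exp_neg_mul_rpow hp hb) fun _ _ => (exp_pos _).le
  exact_mod_cast (summable_nat_add_iff 1).2 h

lemma tsum_exp_neg_mul_add_one_rpow_le (hp : 0 < p) (hb : 0 < b) :
    ∑' n : ℕ, exp (-b * ((n : ℝ) + 1) ^ p) ≤ b ^ (-1 / p) * Gamma (1 / p + 1) := by
  rw [← integral_exp_neg_mul_rpow hp hb]
  exact_mod_cast (antitoneOn_exp_neg_mul_rpow hp hb).tsum_add_one_le_integral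
    (integrableOn_exp_neg_mul_rpow hp hb) fun _ _ => (exp_pos _).le

lemma abs_tsum_le_of_abs_le_exp_neg_mul_add_one_rpow (hp : 0 < p) (hb : 0 < b) {D : ℝ}
    {f : ℕ → ℝ} (hf : ∀ n, |f n| ≤ D * exp (-b * ((n : ℝ) + 1) ^ p)) :
    |∑' n, f n| ≤ D * (b ^ (-1 / p) * Gamma (1 / p + 1)) := by
  have hD : 0 ≤ D := nonneg_of_mul_nonneg_left ((abs_nonneg _).trans (hf 0)) (exp_pos _)
  calc |∑' n, f n| ≤ D * ∑' n : ℕ, exp (-b * ((n : ℝ) + 1) ^ p) :=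
        tsum_of_norm_bounded (f := f) ((summable_exp_neg_mul_add_one_rpow hp hb).hasSum.mul_left D) hf
    _ ≤ D * (b ^ (-1 / p) * Gamma (1 / p + 1)) := by
        gcongr; exact tsum_exp_neg_mul_add_one_rpow_le hp hb

end ExpNegMulRpowSeries

namespace IsLaplaceEigensystem

variable {M : Type*} [MeasurableSpace M] {d : ℕ} {mu : Measure M} {phi : ℕ → M → ℝ}
  {lam : ℕ → ℝ}

lemma exists_abs_mul_le_rpow (hsys : IsLaplaceEigensystem d mu phi lam) (hd : 1 ≤ d) :
    ∃ C : ℝ, 0 < C ∧ ∀ k : ℕ, 1 ≤ k → ∀ x y : M,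
      |phi k x * phi k y| ≤ C * lam k ^ (((d : ℝ) - 1) / 2) := by
  obtain ⟨cw, _, hcw, _, hweyl⟩ := hsys.weyl
  obtain ⟨CH, hCH, hhorm⟩ := hsys.hormander
  have hm : 0 ≤ ((d : ℝ) - 1) / 2 := by have : (1 : ℝ) ≤ d := mod_cast hd; linarith
  refine ⟨CH ^ 2 * (1 + cw⁻¹) ^ (((d : ℝ) - 1) / 2), by positivity, fun k hk x y => ?_⟩
  have hlam : cw ≤ lam k := by
    have : (1 : ℝ) ≤ (k : ℝ) ^ ((2 : ℝ) / d) := one_le_rpow (mod_cast hk) (by positivity)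
    nlinarith [(hweyl k).1]
  have hlam_add_one : lam k + 1 ≤ (1 + cw⁻¹) * lam k := by
    have : 1 ≤ lam k / cw := (one_le_div hcw).2 hlam
    rw [add_mul, one_mul, inv_mul_eq_div]
    linarith
  calc |phi k x * phi k y| = |phi k x| * |phi k y| := abs_mul _ _
    _ ≤ (CH * (lam k + 1) ^ (((d : ℝ) - 1) / 4)) * (CH * (lam k + 1) ^ (((d : ℝ) - 1) / 4)) :=
        mul_le_mul (hhorm k x) (hhorm k y) (abs_nonneg _) ((abs_nonneg _).trans (hhorm k x))
    _ = CH ^ 2 * (lam k + 1) ^ (((d : ℝ) - 1) / 2) := by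
        rw [mul_mul_mul_comm, ← rpow_add (by linarith), ← sq]
        congr 2
        ring
    _ ≤ CH ^ 2 * ((1 + cw⁻¹) * lam k) ^ (((d : ℝ) - 1) / 2) := by
        gcongr
        linarith
    _ = CH ^ 2 * (1 + cw⁻¹) ^ (((d : ℝ) - 1) / 2) * lam k ^ (((d : ℝ) - 1) / 2) := by
        rw [mul_rpow (by positivity) (by linarith), mul_assoc]

end IsLaplaceEigensystem

lemma half_mul_rpow_add_add_one_rpow_le {p c l : ℝ} (hp : 0 ≤ p) (hc : 0 ≤ c) {X k : ℕ}
    (hl : c * ((X + 1 + k : ℕ) : ℝ) ^ p ≤ l) : c / 2 * ((X : ℝ) ^ p + ((k : ℝ) + 1) ^ p) ≤ l := by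
  have hX : (X : ℝ) ^ p ≤ ((X + 1 + k : ℕ) : ℝ) ^ p :=
    rpow_le_rpow (by positivity) (by push_cast; linarith [(k.cast_nonneg : (0 : ℝ) ≤ k)]) hp
  have hk : ((k : ℝ) + 1) ^ p ≤ ((X + 1 + k : ℕ) : ℝ) ^ p :=
    rpow_le_rpow (by positivity) (by push_cast; linarith [(X.cast_nonneg : (0 : ℝ) ≤ X)]) hp
  nlinarith

lemma abs_exp_neg_mul_mul_le {l t m a b C u : ℝ} (ht : 0 < t) (hm : 0 ≤ m) (ha : 0 < a)
    (hma : m ≤ a) (hb : 0 ≤ b) (hC : 0 ≤ C) (hl : 2 * a + 2 * b ≤ l * t) (hu : |u| ≤ C * l ^ m) :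
    |exp (-l * t) * u| ≤ C * t ^ (-m) * ((2 * a) ^ m * exp (-(2 * a))) * exp (-b) := by
  have hl0 : 0 ≤ l := nonneg_of_mul_nonneg_left (by linarith) ht
  calc |exp (-l * t) * u| = exp (-(l * t)) * |u| := by
        rw [abs_mul, abs_of_pos (exp_pos _), neg_mul]
    _ ≤ exp (-(l * t)) * (C * l ^ m) := by gcongr
    _ = C * t ^ (-m) * ((l * t) ^ m * exp (-(l * t))) := by
        rw [mul_rpow hl0 ht.le, rpow_neg ht.le]; field_simp
    _ ≤ C * t ^ (-m) * ((2 * a) ^ m * exp (-(2 * a)) * exp (-b)) :=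
        mul_le_mul_of_nonneg_left
          (rpow_mul_exp_neg_le_of_two_mul_add_two_mul_le hm ha hma hb hl) (by positivity)
    _ = C * t ^ (-m) * ((2 * a) ^ m * exp (-(2 * a))) * exp (-b) := by ring

lemma abs_tsum_le_mul_upperIncGamma {p m c t a C : ℝ} {f : ℕ → ℝ} (hp : 0 < p) (hm : 0 ≤ m)
    (hc : 0 < c) (ht : 0 < t) (ha : 1 ≤ a) (hC : 0 ≤ C)
    (hf : ∀ k : ℕ, |f k| ≤
      C * t ^ (-m) * ((2 * a) ^ m * exp (-(2 * a))) * exp (-(c * t) * ((k : ℝ) + 1) ^ p)) :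
    |∑' k, f k| ≤ 2 ^ (m + 1) * C * c ^ (-1 / p) * Gamma (1 / p + 1) * t ^ (-(m + 1 / p)) *
      upperIncGamma (m + 1 / p) a := by
  have ha0 : 0 < a := one_pos.trans_le ha
  calc |∑' k, f k|
      ≤ C * t ^ (-m) * ((2 * a) ^ m * exp (-(2 * a))) * ((c * t) ^ (-1 / p) * Gamma (1 / p + 1)) :=
        abs_tsum_le_of_abs_le_exp_neg_mul_add_one_rpow hp (by positivity) hf
    _ = 2 ^ m * C * c ^ (-1 / p) * Gamma (1 / p + 1) * t ^ (-(m + 1 / p)) *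
          (a ^ m * exp (-(2 * a))) := by
        rw [mul_rpow zero_le_two ha0.le, mul_rpow hc.le ht.le, neg_add, rpow_add ht, neg_div]
        ring
    _ ≤ 2 ^ m * C * c ^ (-1 / p) * Gamma (1 / p + 1) * t ^ (-(m + 1 / p)) *
          (2 * upperIncGamma (m + 1 / p) a) :=
        mul_le_mul_of_nonneg_left
          (rpow_mul_exp_neg_two_mul_le_upperIncGamma (by positivity)
            (le_add_of_nonneg_right (by positivity)) ha)
          (by positivity)
    _ = 2 ^ (m + 1) * C * c ^ (-1 / p) * Gamma (1 / p + 1) * t ^ (-(m + 1 / p)) *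
          upperIncGamma (m + 1 / p) a := by
        rw [rpow_add_one two_ne_zero]; ring

open scoped Manifold in
theorem heat_kernel_tail_bound_general {d : ℕ} (hd : 1 ≤ d)
    {M : Type*} [MeasurableSpace M]
    (mu : Measure M)
    (phi : ℕ → M → ℝ) (lam : ℕ → ℝ)
    (hsys : IsLaplaceEigensystem d mu phi lam) :
    ∃ c C T : ℝ, 0 < c ∧ 0 < C ∧ 0 < T ∧ ∀ (X : ℕ) (t : ℝ), 0 < t →
      T ≤ (X : ℝ) ^ ((2 : ℝ) / d) * t → ∀ x y : M,
        |∑' k : ℕ, Real.exp (-(lam (X + 1 + k)) * t) * phi (X + 1 + k) x * phi (X + 1 + k) y|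
          ≤ C * t ^ (-((d : ℝ) - 1 / 2)) *
              upperIncGamma ((d : ℝ) - 1 / 2) (c * (X : ℝ) ^ ((2 : ℝ) / d) * t) := by
  obtain ⟨cw, _, hcw, _, hweyl⟩ := hsys.weyl
  obtain ⟨C₀, hC₀, hphi⟩ := hsys.exists_abs_mul_le_rpow hd
  have hd' : (1 : ℝ) ≤ d := mod_cast hd
  set p : ℝ := 2 / d with hp_def
  set m : ℝ := ((d : ℝ) - 1) / 2 with hm_def
  have hp : 0 < p := by positivity
  have hm : 0 ≤ m := by linarith
  set c := cw / 4
  have hc : 0 < c := by positivity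
  refine ⟨c, 2 ^ (m + 1) * C₀ * c ^ (-1 / p) * Gamma (1 / p + 1), (m + 1) / c, hc,
    by positivity, by positivity, fun X t ht hT x y => ?_⟩
  set a := c * (X : ℝ) ^ p * t
  have ha : m + 1 ≤ a := by
    rw [div_le_iff₀ hc] at hT; linarith
  have hterm : ∀ k : ℕ, |exp (-(lam (X + 1 + k)) * t) * phi (X + 1 + k) x * phi (X + 1 + k) y|
      ≤ C₀ * t ^ (-m) * ((2 * a) ^ m * exp (-(2 * a))) * exp (-(c * t) * ((k : ℝ) + 1) ^ p) := by
    intro k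
    have hsplit : 2 * a + 2 * (c * t * ((k : ℝ) + 1) ^ p) ≤ lam (X + 1 + k) * t :=
      calc _ = cw / 2 * ((X : ℝ) ^ p + ((k : ℝ) + 1) ^ p) * t := by ring
        _ ≤ lam (X + 1 + k) * t := by
          gcongr; exact half_mul_rpow_add_add_one_rpow_le hp.le hcw.le (hweyl _).1
    rw [mul_assoc (exp _), neg_mul (c * t)]
    exact abs_exp_neg_mul_mul_le ht hm (by linarith) (by linarith) (by positivity) hC₀.le hsplit
      (hphi _ (by omega) x y)
  have hs : m + 1 / p = (d : ℝ) - 1 / 2 := by rw [hm_def, hp_def]; field_simp; ring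
  rw [← hs]
  exact abs_tsum_le_mul_upperIncGamma hp hm hc ht (by linarith) hC₀.le hterm

open scoped Manifold in
/-- **Heat kernel tail bound.** On a smooth compact `d`-manifold without boundary with Laplace
eigendata `(φ_k, λ_k)`, for `X` and `t > 0` with `X^{2/d} t` large, the tail of the heat kernel
expansion satisfies
`|Σ_{k>X} e^{−λ_k t} φ_k(x) φ_k(y)| ≤ C t^{−(d−1/2)} Γ(d−1/2, c X^{2/d} t)`. -/
theorem heat_kernel_tail_bound {d : ℕ} (hd : 1 ≤ d)
    {M : Type*} [TopologicalSpace M] [CompactSpace M]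
    [ChartedSpace (EuclideanSpace ℝ (Fin d)) M]
    [IsManifold (𝓡 d) (⊤ : ℕ∞) M]
    [MeasurableSpace M] [BorelSpace M]
    (mu : Measure M) [IsFiniteMeasure mu]
    (phi : ℕ → M → ℝ) (lam : ℕ → ℝ)
    (hsmooth : ∀ k, ContMDiff (𝓡 d) 𝓘(ℝ, ℝ) (⊤ : ℕ∞) (phi k))
    (hsys : IsLaplaceEigensystem d mu phi lam) :
    ∃ c C T : ℝ, 0 < c ∧ 0 < C ∧ 0 < T ∧ ∀ (X : ℕ) (t : ℝ), 0 < t →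
      T ≤ (X : ℝ) ^ ((2 : ℝ) / d) * t → ∀ x y : M,
        |∑' k : ℕ, Real.exp (-(lam (X + 1 + k)) * t) * phi (X + 1 + k) x * phi (X + 1 + k) y|
          ≤ C * t ^ (-((d : ℝ) - 1 / 2)) *
              upperIncGamma ((d : ℝ) - 1 / 2) (c * (X : ℝ) ^ ((2 : ℝ) / d) * t) :=
  heat_kernel_tail_bound_general hd mu phi lam hsys
end
end
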